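/- The polynomial identity (1/8)·(z+1)³·(z−1) = (1/8)·z·(z−2)³ + (z−1/2)³ holds for every complex number z. Equivalently, the values k = 1/8, α = 2, β = −1, γ = 1/2 solve the equation k·(z−1)(z−β)³ = k·z(z−α)³ + (z−γ)³ identically in z, so that f₂(z) = (1/8)·(z+1)³(z−1)/(z−1/2)³ and f₂(z) − 1 = (1/8)·z(z−2)³/(z−1/2)³ have the prescribed zeros and poles. -/
import Mathlib


/-- The polynomial identity `(1/8)·(z+1)³·(z−1) = (1/8)·z·(z−2)³ + (z−1/2)³`
holds for every complex number `z`; equivalently, `k = 1/8`, `α = 2`, `β = −1`,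
`γ = 1/2` solve `k·(z−1)(z−β)³ = k·z(z−α)³ + (z−γ)³` identically in `z`. -/
theorem belyi_D2_polynomial_identity :
    ∀ z : ℂ, (1/8 : ℂ) * (z + 1)^3 * (z - 1) =
      (1/8 : ℂ) * z * (z - 2)^3 + (z - 1/2)^3 := by
  intro z; ring
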